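/- Let X and Y be real Hilbert spaces, A, V : X → Y bounded linear operators, G : X → ℝ a γ_G-strongly convex function and F* : Y → ℝ a γ_{F*}-strongly convex function. Let constants satisfy 0 < μ̃_G < μ_G < γ_G, 0 < μ̃_{F*} < μ_{F*} < γ_{F*}, and μ̃_G·μ̃_{F*} ≥ (1/4)·‖A − V‖². Set c = min{(μ_G − μ̃_G)/(μ_G·μ̃_G), (μ_{F*} − μ̃_{F*})/(μ_{F*}·μ̃_{F*})} and υ = min{γ_G − μ_G, γ_{F*} − μ_{F*}}. Let τ satisfy 0 < τ < 1/‖A − V‖ and 0 < τ < c, let α ≥ τ/(c − τ) with α > 0, and set γ = (1 + α)·τ. Let B_Σ : X × Y → X × Y be the bounded linear operator B_Σ(x, y) = (μ̃_G·x + V*(y), μ̃_{F*}·y − A(x)); let ℓ > 0 satisfy ‖B_Σ(z)‖ ≤ ℓ·‖z‖ for all z ∈ X × Y, and let σ > 0 satisfy ⟪B_Σ(z), z⟫ ≥ σ·‖z‖² for all z ∈ X × Y. Set η = (4γ/27)·min{ υ/(1 + 2α)², σ/(4γ²ℓ² + (α + γ·max{μ̃_G, μ̃_{F*}})²) }. Let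 θ satisfy 0 < θ and θ·(1 + α) ≤ 2·(1 + η)/(1 + 2η). Suppose sequences (x^k), (v^k), (p^k) in X and (y^k), (w^k), (q^k) in Y follow the primal-dual Douglas–Rachford iteration with mismatched adjoint with step size τ and relaxation parameter θ, and suppose x̂ ∈ X, ŷ ∈ Y are such that −V*(ŷ) is a subgradient of G at x̂ and A(x̂) is a subgradient of F* at ŷ. Then there exists C ≥ 0 such that for all N ∈ ℕ: √(‖x^N − x̂‖² + ‖y^N − ŷ‖²) ≤ C·((1 + (1 − θ·(1 + α))·η)/(1 + η))^N; in particular the iterates (x^N, y^N) converge linearly (in norm) to (x̂, ŷ). -/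

import Mathlib

open scoped RealInnerProductSpace

/-- `g` is a subgradient of `f` at `x`. -/
def IsSubgradientAt {E : Type*} [NormedAddCommGroup E] [InnerProductSpace ℝ E]
    (f : E → ℝ) (g x : E) : Prop :=
  ∀ z, f x + ⟪g, z - x⟫ ≤ f z

/-- `f` is `γ`-strongly convex: `x ↦ f x − (γ/2)‖x‖²` is convex. -/
def IsStronglyConvex {E : Type*} [NormedAddCommGroup E] [InnerProductSpace ℝ E]
    (γ : ℝ) (f : E → ℝ) : Prop :=
  0 < γ ∧ ConvexOn ℝ Set.univ (fun x => f x - γ / 2 * ‖x‖ ^ 2)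

/-!
The points `ph = xh - τ V* yh` and `qh = yh + τ A xh` are fixed by the iteration, with
`prox_{τG} ph = xh` and `prox_{τF*} qh = yh`. The prox maps are nonexpansive, so it suffices
that the error `e = (p^k - ph, q^k - qh)` contracts by the factor
`R = (1 + (1 - θ(1+α))η)/(1+η)`. Write `a = (x^{k+1} - xh, y^{k+1} - yh)`,
`b = (v^{k+1} - xh, w^{k+1} - yh)` and `r = a - b`, so that `e` is updated to `e - θ r`.
Strong convexity of `G` and `F*`, strong monotonicity of `B_Σ` and the step-size condition bound
`(1+α)⟪r, e⟫ - ‖r‖²` from below by `γ (υ ‖a‖² + σ ‖b‖²)`; the linear step and the bound `ℓ` on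
`B_Σ` bound `η ‖(1+α) e - r‖²` from above by the same quantity. Together this is
`(1+η)‖r‖² + η(1+α)²‖e‖² ≤ (1+2η)(1+α)⟪r, e⟫`, which with Cauchy–Schwarz gives
`‖e - θ r‖ ≤ R ‖e‖`.
-/

open Filter Topology

section StronglyConvex

variable {E : Type*} [NormedAddCommGroup E] [InnerProductSpace ℝ E] {γ : ℝ} {f : E → ℝ}

theorem IsStronglyConvex.add_inner_add_sq_le (hf : IsStronglyConvex γ f) {s x : E}
    (hs : IsSubgradientAt f s x) (z : E) :
    f x + ⟪s, z - x⟫ + γ / 2 * ‖z - x‖ ^ 2 ≤ f z := by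
  have along_segment : ∀ t ∈ Set.Ioc (0 : ℝ) 1,
      f x + ⟪s, z - x⟫ + γ / 2 * (1 - t) * ‖z - x‖ ^ 2 ≤ f z := by
    rintro t ⟨ht0, ht1⟩
    have hconv := hf.2.2 (Set.mem_univ x) (Set.mem_univ z) (sub_nonneg.2 ht1) ht0.le
      (sub_add_cancel 1 t)
    have hsub := hs ((1 - t) • x + t • z)
    have hseg : (1 - t) • x + t • z = x + t • (z - x) := by module
    have hz : ‖z‖ ^ 2 = ‖x‖ ^ 2 + 2 * ⟪x, z - x⟫ + ‖z - x‖ ^ 2 := by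
      rw [← norm_add_sq_real, add_sub_cancel]
    simp only [smul_eq_mul, hseg, add_sub_cancel_left, real_inner_smul_right] at hconv hsub
    rw [norm_add_sq_real, real_inner_smul_right, norm_smul, Real.norm_of_nonneg ht0.le, hz]
      at hconv
    nlinarith
  have htends : Tendsto (fun t : ℝ => f x + ⟪s, z - x⟫ + γ / 2 * (1 - t) * ‖z - x‖ ^ 2)
      (𝓝[>] 0) (𝓝 (f x + ⟪s, z - x⟫ + γ / 2 * ‖z - x‖ ^ 2)) := by
    have : Continuous fun t : ℝ => f x + ⟪s, z - x⟫ + γ / 2 * (1 - t) * ‖z - x‖ ^ 2 := by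
      fun_prop
    simpa using (this.tendsto 0).mono_left nhdsWithin_le_nhds
  exact le_of_tendsto htends (Filter.mem_of_superset (Ioc_mem_nhdsGT one_pos) along_segment)

theorem IsStronglyConvex.mul_norm_sub_sq_le_inner (hf : IsStronglyConvex γ f) {s₁ s₂ x₁ x₂ : E}
    (h₁ : IsSubgradientAt f s₁ x₁) (h₂ : IsSubgradientAt f s₂ x₂) :
    γ * ‖x₁ - x₂‖ ^ 2 ≤ ⟪s₁ - s₂, x₁ - x₂⟫ := by
  have e₁ := hf.add_inner_add_sq_le h₁ x₂
  have e₂ := hf.add_inner_add_sq_le h₂ x₁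
  rw [norm_sub_rev] at e₁
  rw [← neg_sub x₁ x₂, inner_neg_right] at e₁
  rw [inner_sub_left]
  linarith

theorem IsStronglyConvex.mul_norm_sq_le_inner_of_prox (hf : IsStronglyConvex γ f)
    {τ : ℝ} (hτ : 0 < τ) {p u s xh ph : E} (hu : IsSubgradientAt f ((1 / τ) • (p - u)) u)
    (hs : IsSubgradientAt f s xh) (hph : ph = xh + τ • s) :
    τ * γ * ‖u - xh‖ ^ 2 ≤ ⟪(p - ph) - (u - xh), u - xh⟫ := by
  have hmono := hf.mul_norm_sub_sq_le_inner hu hs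
  have hdiff : (p - ph) - (u - xh) = τ • ((1 / τ) • (p - u) - s) := by
    rw [hph, smul_sub, smul_smul, mul_one_div_cancel hτ.ne', one_smul]
    abel
  rw [hdiff, real_inner_smul_left, mul_assoc]
  exact mul_le_mul_of_nonneg_left hmono hτ.le

end StronglyConvex

section Seminormed

variable {E : Type*} [SeminormedAddCommGroup E]

theorem norm_add₃_sq_le (x y z : E) : ‖x + y + z‖ ^ 2 ≤ 3 * (‖x‖ ^ 2 + ‖y‖ ^ 2 + ‖z‖ ^ 2) := by
  have h := norm_add₃_le (a := x) (b := y) (c := z)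
  nlinarith [norm_nonneg (x + y + z), sq_nonneg (‖x‖ - ‖y‖), sq_nonneg (‖y‖ - ‖z‖),
    sq_nonneg (‖x‖ - ‖z‖)]

/-- Young's inequality applied after `‖b‖ ≤ ‖a‖ + ‖a - b‖`. -/
theorem mul_mul_norm_sq_le_of_step {γ α μ μt : ℝ} (hγ : 0 ≤ γ) (hμt : 0 < μt) (hμ : μt < μ)
    (hstep : γ * (μ * μt) ≤ α * (μ - μt)) (a b : E) :
    γ * μt * ‖b‖ ^ 2 ≤ γ * μ * ‖a‖ ^ 2 + α * ‖a - b‖ ^ 2 := by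
  have htri : ‖b‖ ≤ ‖a‖ + ‖a - b‖ := by
    simpa using norm_sub_le a (a - b)
  have hsq : ‖b‖ ^ 2 ≤ (‖a‖ + ‖a - b‖) ^ 2 := pow_le_pow_left₀ (norm_nonneg b) htri 2
  nlinarith [mul_nonneg hγ (sq_nonneg ((μ - μt) * ‖a‖ - μt * ‖a - b‖)),
    mul_nonneg (mul_nonneg hγ hμt.le) (sub_nonneg.mpr hsq),
    mul_nonneg (sub_nonneg.mpr hstep) (sq_nonneg ‖a - b‖), sub_pos.mpr hμ]

end Seminormed

section InnerProductSpace

variable {E : Type*} [NormedAddCommGroup E] [InnerProductSpace ℝ E]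

theorem norm_le_norm_of_mul_norm_sq_le_inner_sub {c : ℝ} {a d : E} (hc : 0 ≤ c)
    (h : c * ‖a‖ ^ 2 ≤ ⟪d - a, a⟫) : ‖a‖ ≤ ‖d‖ := by
  rw [inner_sub_left, real_inner_self_eq_norm_sq] at h
  have := real_inner_le_norm d a
  nlinarith [norm_nonneg a, norm_nonneg d, mul_nonneg hc (sq_nonneg ‖a‖)]

theorem norm_smul_sq (c : ℝ) (x : E) : ‖c • x‖ ^ 2 = c ^ 2 * ‖x‖ ^ 2 := by
  rw [norm_smul, Real.norm_eq_abs, mul_pow, sq_abs]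

theorem norm_smul_sub_sq (c : ℝ) (d r : E) :
    ‖c • d - r‖ ^ 2 = c ^ 2 * ‖d‖ ^ 2 - 2 * c * ⟪r, d⟫ + ‖r‖ ^ 2 := by
  rw [norm_sub_sq_real, norm_smul_sq, real_inner_smul_left, real_inner_comm]
  ring

theorem norm_sub_smul_sq (c : ℝ) (d r : E) :
    ‖d - c • r‖ ^ 2 = ‖d‖ ^ 2 - 2 * c * ⟪r, d⟫ + c ^ 2 * ‖r‖ ^ 2 := by
  rw [norm_sub_sq_real, norm_smul_sq, real_inner_smul_right, real_inner_comm]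
  ring

theorem pddr_component_lower_bound {a b d u : E} {τ α γ γf μ μt : ℝ} (hτ : 0 ≤ τ)
    (hα : 0 ≤ α) (hγ : γ = (1 + α) * τ) (hμt : 0 < μt) (hμ : μt < μ)
    (hstep : γ * (μ * μt) ≤ α * (μ - μt)) (hprox : τ * γf * ‖a‖ ^ 2 ≤ ⟪d - a, a⟫)
    (hlin : τ • u = (2 : ℝ) • a - b - d) :
    γ * ((γf - μ) * ‖a‖ ^ 2 + ⟪μt • b + u, b⟫) ≤ (1 + α) * ⟪a - b, d⟫ - ‖a - b‖ ^ 2 := by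
  have hsplit : ⟪a - b, d⟫ = ⟪d - a, a⟫ + τ * ⟪u, b⟫ + ‖a - b‖ ^ 2 := by
    rw [← real_inner_smul_left, hlin, ← real_inner_self_eq_norm_sq]
    simp only [inner_sub_left, inner_sub_right, real_inner_smul_left, real_inner_comm a b,
      real_inner_comm d a, real_inner_comm d b]
    ring
  have hyoung := mul_mul_norm_sq_le_of_step (hγ ▸ mul_nonneg (by linarith) hτ) hμt hμ hstep a b
  have hprox' := mul_le_mul_of_nonneg_left hprox (by linarith : (0 : ℝ) ≤ 1 + α)
  rw [inner_add_left, real_inner_smul_left, real_inner_self_eq_norm_sq, hsplit, hγ]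
  rw [hγ] at hyoung
  nlinarith

theorem pddr_component_upper_bound {a b d u : E} {τ α γ μt : ℝ} (hτ : 0 ≤ τ)
    (hα : 0 ≤ α) (hγ : γ = (1 + α) * τ) (hμt : 0 ≤ μt)
    (hlin : τ • u = (2 : ℝ) • a - b - d) :
    ‖(1 + α) • d - (a - b)‖ ^ 2 ≤
      3 * ((1 + 2 * α) ^ 2 * ‖a‖ ^ 2 + (α + γ * μt) ^ 2 * ‖b‖ ^ 2 +
        γ ^ 2 * ‖μt • b + u‖ ^ 2) := by
  have hdecomp : (1 + α) • d - (a - b) =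
      (1 + 2 * α) • a + (γ * μt - α) • b + (-γ) • (μt • b + u) := by
    rw [hγ]
    linear_combination (norm := module) (1 + α) • hlin
  have hcoef : (γ * μt - α) ^ 2 ≤ (α + γ * μt) ^ 2 := by
    nlinarith [mul_nonneg (hγ ▸ mul_nonneg (by linarith) hτ : 0 ≤ γ) hμt]
  rw [hdecomp]
  refine (norm_add₃_sq_le _ _ _).trans ?_
  simp only [norm_smul_sq, neg_sq]
  gcongr

end InnerProductSpace

theorem smul_map_sub_eq_of_step {E F : Type*} [NormedAddCommGroup E] [InnerProductSpace ℝ E]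
    [NormedAddCommGroup F] [InnerProductSpace ℝ F] (L : F →L[ℝ] E) {τ : ℝ} {v x p xh ph : E}
    {w wh : F} (h : v + τ • L w = (2 : ℝ) • x - p) (hph : ph = xh - τ • L wh) :
    τ • L (w - wh) = (2 : ℝ) • (x - xh) - (v - xh) - (p - ph) := by
  rw [map_sub, smul_sub, hph, eq_sub_of_add_eq' h]
  module

theorem inner_add_inner_sq_le {X Y : Type*} [NormedAddCommGroup X] [InnerProductSpace ℝ X]
    [NormedAddCommGroup Y] [InnerProductSpace ℝ Y] (a b : X) (c d : Y) :
    (⟪a, b⟫ + ⟪c, d⟫) ^ 2 ≤ (‖a‖ ^ 2 + ‖c‖ ^ 2) * (‖b‖ ^ 2 + ‖d‖ ^ 2) := by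
  have h₁ := abs_real_inner_le_norm a b
  have h₂ := abs_real_inner_le_norm c d
  have habs : |⟪a, b⟫ + ⟪c, d⟫| ≤ ‖a‖ * ‖b‖ + ‖c‖ * ‖d‖ := (abs_add_le _ _).trans (add_le_add h₁ h₂)
  have hsq := sq_le_sq' (abs_le.1 habs).1 (abs_le.1 habs).2
  nlinarith [sq_nonneg (‖a‖ * ‖d‖ - ‖c‖ * ‖b‖)]

/-- Cauchy–Schwarz and `hkey` force `η (1+α) E ≤ (1+η) P`; the rest is a sum of nonnegative
products. -/
theorem relaxation_contraction {η α θ M P E : ℝ} (hη : 0 ≤ η) (hα : 0 < 1 + α) (hθ : 0 ≤ θ)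
    (hθη : θ * (1 + α) ≤ 2 * (1 + η) / (1 + 2 * η)) (hE : 0 ≤ E)
    (hCS : P ^ 2 ≤ M * E)
    (hkey : (1 + η) * M + η * (1 + α) ^ 2 * E ≤ (1 + 2 * η) * (1 + α) * P) :
    E - 2 * θ * P + θ ^ 2 * M ≤ ((1 + (1 - θ * (1 + α)) * η) / (1 + η)) ^ 2 * E := by
  have h1η : 0 < 1 + η := by linarith
  rw [le_div_iff₀ (by linarith)] at hθη
  have hfactor : ((1 + η) * P - η * (1 + α) * E) * (P - (1 + α) * E) ≤ 0 := by
    nlinarith [mul_le_mul_of_nonneg_left hkey hE, mul_le_mul_of_nonneg_left hCS h1η.le]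
  have hP : η * (1 + α) * E ≤ (1 + η) * P := by
    by_contra! hlt
    have hPE : P < (1 + α) * E := by nlinarith [mul_nonneg hα.le hE]
    nlinarith [mul_pos (sub_pos.2 hlt) (sub_pos.2 hPE)]
  rw [div_pow, div_mul_eq_mul_div, le_div_iff₀ (by positivity)]
  nlinarith [mul_nonneg (mul_nonneg hθ (sub_nonneg.2 hP)) (sub_nonneg.2 hθη),
    mul_nonneg (mul_nonneg (sq_nonneg θ) h1η.le) (sub_nonneg.2 hkey)]

theorem relaxation_rate_pos {η α θ : ℝ} (hη : 0 ≤ η)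
    (hθη : θ * (1 + α) ≤ 2 * (1 + η) / (1 + 2 * η)) :
    0 < (1 + (1 - θ * (1 + α)) * η) / (1 + η) := by
  rw [le_div_iff₀ (by linarith)] at hθη
  apply div_pos _ (by linarith)
  nlinarith

theorem mul_mul_le_of_step_size {τ c α γ μ μt : ℝ} (hα₀ : 0 ≤ α) (hτc : τ < c)
    (hα : τ / (c - τ) ≤ α) (hγ : γ = (1 + α) * τ) (hμt : 0 < μt) (hμ : μt < μ)
    (hc : c ≤ (μ - μt) / (μ * μt)) :
    γ * (μ * μt) ≤ α * (μ - μt) := by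
  have hγc : γ ≤ α * c := by
    rw [div_le_iff₀ (sub_pos.2 hτc)] at hα
    linarith
  have hμ₀ : 0 < μ := hμt.trans hμ
  calc γ * (μ * μt) ≤ α * ((μ - μt) / (μ * μt)) * (μ * μt) := by gcongr; exact hγc.trans (by gcongr)
    _ = α * (μ - μt) := by field_simp

theorem pddr_rate_constant_bounds {γ υ σ α ℓ m η : ℝ} (hγ : 0 ≤ γ) (hυ : 0 ≤ υ) (hσ : 0 ≤ σ)
    (hα : 0 < α) (hm : 0 ≤ m)
    (hη : η = 4 * γ / 27 * min (υ / (1 + 2 * α) ^ 2) (σ / (4 * γ ^ 2 * ℓ ^ 2 + (α + γ * m) ^ 2))) :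
    0 ≤ η ∧ 3 * η * (1 + 2 * α) ^ 2 ≤ γ * υ ∧ 3 * η * ((α + γ * m) ^ 2 + γ ^ 2 * ℓ ^ 2) ≤ γ * σ := by
  have hη₀ : 0 ≤ η := hη ▸ by positivity
  have hη₁ : η ≤ 4 * γ / 27 * (υ / (1 + 2 * α) ^ 2) :=
    hη ▸ mul_le_mul_of_nonneg_left (min_le_left _ _) (by positivity)
  have hη₂ : η ≤ 4 * γ / 27 * (σ / (4 * γ ^ 2 * ℓ ^ 2 + (α + γ * m) ^ 2)) :=
    hη ▸ mul_le_mul_of_nonneg_left (min_le_right _ _) (by positivity)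
  rw [← mul_div_assoc, le_div_iff₀ (by positivity)] at hη₁ hη₂
  refine ⟨hη₀, by nlinarith [mul_nonneg hγ hυ], ?_⟩
  nlinarith [mul_nonneg hγ hσ, mul_nonneg hη₀ (sq_nonneg (γ * ℓ))]

theorem exists_sqrt_le_mul_pow {R : ℝ} (hR : 0 < R) {e f : ℕ → ℝ} (he₀ : 0 ≤ e 0)
    (hfe : ∀ k, f (k + 1) ≤ e k) (he : ∀ k, e (k + 1) ≤ R ^ 2 * e k) :
    ∃ C, 0 ≤ C ∧ ∀ N, √(f N) ≤ C * R ^ N := by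
  have hdecay : ∀ k, e k ≤ (√(e 0) * R ^ k) ^ 2 := by
    intro k
    induction k with
    | zero => simp [Real.sq_sqrt he₀]
    | succ k ih => calc
        e (k + 1) ≤ R ^ 2 * e k := he k
        _ ≤ R ^ 2 * (√(e 0) * R ^ k) ^ 2 := by gcongr
        _ = (√(e 0) * R ^ (k + 1)) ^ 2 := by ring
  refine ⟨max √(f 0) (√(e 0) / R), le_max_of_le_left (Real.sqrt_nonneg _), ?_⟩
  rintro (_ | k)
  · simp
  · calc √(f (k + 1)) ≤ √(e 0) * R ^ k :=
          Real.sqrt_le_iff.2 ⟨by positivity, (hfe k).trans (hdecay k)⟩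
      _ = √(e 0) / R * R ^ (k + 1) := by field_simp; ring
      _ ≤ max √(f 0) (√(e 0) / R) * R ^ (k + 1) := by gcongr; exact le_max_right _ _

theorem pddr_error_contraction {X Y : Type*} [NormedAddCommGroup X] [InnerProductSpace ℝ X]
    [NormedAddCommGroup Y] [InnerProductSpace ℝ Y] {a₁ b₁ d₁ u₁ : X} {a₂ b₂ d₂ u₂ : Y}
    {τ α γ θ η υ σ ℓ γ₁ γ₂ μ₁ μ₂ μt₁ μt₂ : ℝ} (hτ : 0 < τ) (hα : 0 < α)
    (hγ : γ = (1 + α) * τ) (hθ : 0 ≤ θ) (hθη : θ * (1 + α) ≤ 2 * (1 + η) / (1 + 2 * η))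
    (hη : 0 ≤ η) (hηυ : 3 * η * (1 + 2 * α) ^ 2 ≤ γ * υ)
    (hησ : 3 * η * ((α + γ * max μt₁ μt₂) ^ 2 + γ ^ 2 * ℓ ^ 2) ≤ γ * σ)
    (hυ₁ : υ ≤ γ₁ - μ₁) (hυ₂ : υ ≤ γ₂ - μ₂) (hμt₁ : 0 < μt₁) (hμ₁ : μt₁ < μ₁)
    (hμt₂ : 0 < μt₂) (hμ₂ : μt₂ < μ₂) (hstep₁ : γ * (μ₁ * μt₁) ≤ α * (μ₁ - μt₁))
    (hstep₂ : γ * (μ₂ * μt₂) ≤ α * (μ₂ - μt₂))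
    (hprox₁ : τ * γ₁ * ‖a₁‖ ^ 2 ≤ ⟪d₁ - a₁, a₁⟫) (hlin₁ : τ • u₁ = (2 : ℝ) • a₁ - b₁ - d₁)
    (hprox₂ : τ * γ₂ * ‖a₂‖ ^ 2 ≤ ⟪d₂ - a₂, a₂⟫) (hlin₂ : τ • u₂ = (2 : ℝ) • a₂ - b₂ - d₂)
    (hσ : σ * (‖b₁‖ ^ 2 + ‖b₂‖ ^ 2) ≤ ⟪μt₁ • b₁ + u₁, b₁⟫ + ⟪μt₂ • b₂ + u₂, b₂⟫)
    (hℓ : ‖μt₁ • b₁ + u₁‖ ^ 2 + ‖μt₂ • b₂ + u₂‖ ^ 2 ≤ ℓ ^ 2 * (‖b₁‖ ^ 2 + ‖b₂‖ ^ 2)) :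
    ‖d₁ - θ • (a₁ - b₁)‖ ^ 2 + ‖d₂ - θ • (a₂ - b₂)‖ ^ 2 ≤
      ((1 + (1 - θ * (1 + α)) * η) / (1 + η)) ^ 2 * (‖d₁‖ ^ 2 + ‖d₂‖ ^ 2) := by
  have hγ₀ : 0 ≤ γ := hγ ▸ by positivity
  have low₁ := pddr_component_lower_bound hτ.le hα.le hγ hμt₁ hμ₁ hstep₁ hprox₁ hlin₁
  have low₂ := pddr_component_lower_bound hτ.le hα.le hγ hμt₂ hμ₂ hstep₂ hprox₂ hlin₂
  have up₁ := pddr_component_upper_bound hτ.le hα.le hγ hμt₁.le hlin₁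
  have up₂ := pddr_component_upper_bound hτ.le hα.le hγ hμt₂.le hlin₂
  have hm₁ : (α + γ * μt₁) ^ 2 ≤ (α + γ * max μt₁ μt₂) ^ 2 := by gcongr; exact le_max_left _ _
  have hm₂ : (α + γ * μt₂) ^ 2 ≤ (α + γ * max μt₁ μt₂) ^ 2 := by gcongr; exact le_max_right _ _
  have hupper : η * (‖(1 + α) • d₁ - (a₁ - b₁)‖ ^ 2 + ‖(1 + α) • d₂ - (a₂ - b₂)‖ ^ 2) ≤
      γ * (υ * (‖a₁‖ ^ 2 + ‖a₂‖ ^ 2) + σ * (‖b₁‖ ^ 2 + ‖b₂‖ ^ 2)) := by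
    linarith [mul_le_mul_of_nonneg_left (add_le_add up₁ up₂) hη,
      mul_nonneg (mul_nonneg hη (sub_nonneg.2 hm₁)) (sq_nonneg ‖b₁‖),
      mul_nonneg (mul_nonneg hη (sub_nonneg.2 hm₂)) (sq_nonneg ‖b₂‖),
      mul_le_mul_of_nonneg_left hℓ (mul_nonneg hη (sq_nonneg γ)),
      mul_le_mul_of_nonneg_right hηυ (by positivity : (0 : ℝ) ≤ ‖a₁‖ ^ 2 + ‖a₂‖ ^ 2),
      mul_le_mul_of_nonneg_right hησ (by positivity : (0 : ℝ) ≤ ‖b₁‖ ^ 2 + ‖b₂‖ ^ 2)]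
  have hlower : γ * (υ * (‖a₁‖ ^ 2 + ‖a₂‖ ^ 2) + σ * (‖b₁‖ ^ 2 + ‖b₂‖ ^ 2)) ≤
      (1 + α) * (⟪a₁ - b₁, d₁⟫ + ⟪a₂ - b₂, d₂⟫) - (‖a₁ - b₁‖ ^ 2 + ‖a₂ - b₂‖ ^ 2) := by
    linarith [mul_le_mul_of_nonneg_left hσ hγ₀,
      mul_nonneg (mul_nonneg hγ₀ (sub_nonneg.2 hυ₁)) (sq_nonneg ‖a₁‖),
      mul_nonneg (mul_nonneg hγ₀ (sub_nonneg.2 hυ₂)) (sq_nonneg ‖a₂‖)]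
  have hkey : (1 + η) * (‖a₁ - b₁‖ ^ 2 + ‖a₂ - b₂‖ ^ 2) + η * (1 + α) ^ 2 * (‖d₁‖ ^ 2 + ‖d₂‖ ^ 2)
      ≤ (1 + 2 * η) * (1 + α) * (⟪a₁ - b₁, d₁⟫ + ⟪a₂ - b₂, d₂⟫) := by
    rw [norm_smul_sub_sq, norm_smul_sub_sq] at hupper
    linarith
  rw [norm_sub_smul_sq, norm_sub_smul_sq]
  linarith [relaxation_contraction hη (by linarith) hθ hθη (by positivity)
    (inner_add_inner_sq_le _ _ _ _) hkey]

theorem pddr_mismatch_linear_convergence_general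
    {X Y : Type*} [NormedAddCommGroup X] [InnerProductSpace ℝ X] [CompleteSpace X]
    [NormedAddCommGroup Y] [InnerProductSpace ℝ Y] [CompleteSpace Y]
    (A V : X →L[ℝ] Y) (G : X → ℝ) (Fs : Y → ℝ) (γG γFs : ℝ)
    (hG : IsStronglyConvex γG G) (hFs : IsStronglyConvex γFs Fs)
    (μG μFs μtG μtFs : ℝ)
    (hμtG : 0 < μtG) (hμG : μtG < μG) (hμGγ : μG < γG)
    (hμtFs : 0 < μtFs) (hμFs : μtFs < μFs) (hμFsγ : μFs < γFs)
    (c : ℝ) (hc : c = min ((μG - μtG) / (μG * μtG)) ((μFs - μtFs) / (μFs * μtFs)))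
    (υ : ℝ) (hυ : υ = min (γG - μG) (γFs - μFs))
    (τ : ℝ) (hτ0 : 0 < τ) (hτc : τ < c)
    (α : ℝ) (hα0 : 0 < α) (hα : τ / (c - τ) ≤ α)
    (γ : ℝ) (hγ : γ = (1 + α) * τ)
    (ℓ : ℝ)
    (hℓ : ∀ (x : X) (y : Y),
      ‖μtG • x + (ContinuousLinearMap.adjoint V) y‖ ^ 2 + ‖μtFs • y - A x‖ ^ 2 ≤
        ℓ ^ 2 * (‖x‖ ^ 2 + ‖y‖ ^ 2))
    (σ : ℝ) (hσ0 : 0 < σ)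
    (hσ : ∀ (x : X) (y : Y),
      σ * (‖x‖ ^ 2 + ‖y‖ ^ 2) ≤
        ⟪μtG • x + (ContinuousLinearMap.adjoint V) y, x⟫ + ⟪μtFs • y - A x, y⟫)
    (η : ℝ)
    (hη : η = (4 * γ / 27) * min (υ / (1 + 2 * α) ^ 2)
      (σ / (4 * γ ^ 2 * ℓ ^ 2 + (α + γ * max μtG μtFs) ^ 2)))
    (θ : ℝ) (hθ0 : 0 < θ) (hθ : θ * (1 + α) ≤ 2 * (1 + η) / (1 + 2 * η))
    (PG : X → X) (PF : Y → Y)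
    (hPG : ∀ p z, G (PG p) + ⟪(1 / τ) • (p - PG p), z - PG p⟫ ≤ G z)
    (hPF : ∀ q z, Fs (PF q) + ⟪(1 / τ) • (q - PF q), z - PF q⟫ ≤ Fs z)
    (x v p : ℕ → X) (y w q : ℕ → Y)
    (hx : ∀ k, x (k + 1) = PG (p k))
    (hy : ∀ k, y (k + 1) = PF (q k))
    (hv : ∀ k, v (k + 1) + τ • (ContinuousLinearMap.adjoint V) (w (k + 1)) =
      (2 : ℝ) • x (k + 1) - p k)
    (hw : ∀ k, w (k + 1) - τ • A (v (k + 1)) = (2 : ℝ) • y (k + 1) - q k)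
    (hp : ∀ k, p (k + 1) = p k + θ • (v (k + 1) - x (k + 1)))
    (hq : ∀ k, q (k + 1) = q k + θ • (w (k + 1) - y (k + 1)))
    (xh : X) (yh : Y)
    (hxh : IsSubgradientAt G (-(ContinuousLinearMap.adjoint V) yh) xh)
    (hyh : IsSubgradientAt Fs (A xh) yh) :
    ∃ C : ℝ, 0 ≤ C ∧ ∀ N : ℕ,
      Real.sqrt (‖x N - xh‖ ^ 2 + ‖y N - yh‖ ^ 2) ≤
        C * ((1 + (1 - θ * (1 + α)) * η) / (1 + η)) ^ N := by
  obtain ⟨hη₀, hηυ, hησ⟩ := pddr_rate_constant_bounds (hγ ▸ by positivity)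
    (hυ ▸ le_min (by linarith) (by linarith)) hσ0.le hα0 (le_max_of_le_left hμtG.le) hη
  have hstepG := mul_mul_le_of_step_size hα0.le hτc hα hγ hμtG hμG (hc ▸ min_le_left _ _)
  have hstepF := mul_mul_le_of_step_size hα0.le hτc hα hγ hμtFs hμFs (hc ▸ min_le_right _ _)
  set ph := xh - τ • (ContinuousLinearMap.adjoint V) yh with hph
  set qh := yh - τ • (-A) xh with hqh
  have hproxG : ∀ k, τ * γG * ‖x (k + 1) - xh‖ ^ 2 ≤
      ⟪(p k - ph) - (x (k + 1) - xh), x (k + 1) - xh⟫ := fun k =>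
    hG.mul_norm_sq_le_inner_of_prox hτ0 (hx k ▸ hPG (p k)) hxh (by simp [ph, sub_eq_add_neg])
  have hproxF : ∀ k, τ * γFs * ‖y (k + 1) - yh‖ ^ 2 ≤
      ⟪(q k - qh) - (y (k + 1) - yh), y (k + 1) - yh⟫ := fun k =>
    hFs.mul_norm_sq_le_inner_of_prox hτ0 (hy k ▸ hPF (q k)) hyh (by simp [qh])
  have hshadow : ∀ k, ‖x (k + 1) - xh‖ ^ 2 + ‖y (k + 1) - yh‖ ^ 2 ≤
      ‖p k - ph‖ ^ 2 + ‖q k - qh‖ ^ 2 := fun k => by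
    gcongr
    exacts [norm_le_norm_of_mul_norm_sq_le_inner_sub (mul_pos hτ0 hG.1).le (hproxG k),
      norm_le_norm_of_mul_norm_sq_le_inner_sub (mul_pos hτ0 hFs.1).le (hproxF k)]
  have hcontract : ∀ k, ‖p (k + 1) - ph‖ ^ 2 + ‖q (k + 1) - qh‖ ^ 2 ≤
      ((1 + (1 - θ * (1 + α)) * η) / (1 + η)) ^ 2 * (‖p k - ph‖ ^ 2 + ‖q k - qh‖ ^ 2) := by
    intro k
    have hpk : p (k + 1) - ph = (p k - ph) - θ • ((x (k + 1) - xh) - (v (k + 1) - xh)) := by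
      rw [hp k]; module
    have hqk : q (k + 1) - qh = (q k - qh) - θ • ((y (k + 1) - yh) - (w (k + 1) - yh)) := by
      rw [hq k]; module
    rw [hpk, hqk]
    have hB := hσ (v (k + 1) - xh) (w (k + 1) - yh)
    have hL := hℓ (v (k + 1) - xh) (w (k + 1) - yh)
    rw [sub_eq_add_neg _ (A _), ← neg_apply] at hB hL
    exact pddr_error_contraction hτ0 hα0 hγ hθ0.le hθ hη₀ hηυ hησ (hυ ▸ min_le_left _ _)
      (hυ ▸ min_le_right _ _) hμtG hμG hμtFs hμFs hstepG hstepF (hproxG k)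
      (smul_map_sub_eq_of_step _ (hv k) hph) (hproxF k)
      (smul_map_sub_eq_of_step (-A) (by simpa [sub_eq_add_neg] using hw k) hqh) hB hL
  exact exists_sqrt_le_mul_pow (relaxation_rate_pos hη₀ hθ) (by positivity) hshadow hcontract

/-- Linear convergence of the primal-dual Douglas–Rachford method with mismatched adjoint.
Here `BΣ(x, y) = (μ̃_G x + V*y, μ̃_{F*} y − Ax)` (written componentwise, with the Hilbert
product norm `‖(x,y)‖² = ‖x‖² + ‖y‖²`), `ℓ` is a Lipschitz bound and `σ` a strong
monotonicity constant for `BΣ`, and the rate is `(1 + (1 − θ(1+α))η)/(1+η)` with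
`η = (4γ/27)·min{υ/(1+2α)², σ/(4γ²ℓ² + (α + γ max{μ̃_G, μ̃_{F*}})²)}`. -/
theorem pddr_mismatch_linear_convergence
    {X Y : Type*} [NormedAddCommGroup X] [InnerProductSpace ℝ X] [CompleteSpace X]
    [NormedAddCommGroup Y] [InnerProductSpace ℝ Y] [CompleteSpace Y]
    (A V : X →L[ℝ] Y) (G : X → ℝ) (Fs : Y → ℝ) (γG γFs : ℝ)
    (hG : IsStronglyConvex γG G) (hFs : IsStronglyConvex γFs Fs)
    (μG μFs μtG μtFs : ℝ)
    (hμtG : 0 < μtG) (hμG : μtG < μG) (hμGγ : μG < γG)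
    (hμtFs : 0 < μtFs) (hμFs : μtFs < μFs) (hμFsγ : μFs < γFs)
    (hmm : (1 / 4) * ‖A - V‖ ^ 2 ≤ μtG * μtFs)
    (c : ℝ) (hc : c = min ((μG - μtG) / (μG * μtG)) ((μFs - μtFs) / (μFs * μtFs)))
    (υ : ℝ) (hυ : υ = min (γG - μG) (γFs - μFs))
    (τ : ℝ) (hτ0 : 0 < τ) (hτ1 : τ < 1 / ‖A - V‖) (hτc : τ < c)
    (α : ℝ) (hα0 : 0 < α) (hα : τ / (c - τ) ≤ α)
    (γ : ℝ) (hγ : γ = (1 + α) * τ)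
    (ℓ : ℝ) (hℓ0 : 0 < ℓ)
    (hℓ : ∀ (x : X) (y : Y),
      ‖μtG • x + (ContinuousLinearMap.adjoint V) y‖ ^ 2 + ‖μtFs • y - A x‖ ^ 2 ≤
        ℓ ^ 2 * (‖x‖ ^ 2 + ‖y‖ ^ 2))
    (σ : ℝ) (hσ0 : 0 < σ)
    (hσ : ∀ (x : X) (y : Y),
      σ * (‖x‖ ^ 2 + ‖y‖ ^ 2) ≤
        ⟪μtG • x + (ContinuousLinearMap.adjoint V) y, x⟫ + ⟪μtFs • y - A x, y⟫)
    (η : ℝ)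
    (hη : η = (4 * γ / 27) * min (υ / (1 + 2 * α) ^ 2)
      (σ / (4 * γ ^ 2 * ℓ ^ 2 + (α + γ * max μtG μtFs) ^ 2)))
    (θ : ℝ) (hθ0 : 0 < θ) (hθ : θ * (1 + α) ≤ 2 * (1 + η) / (1 + 2 * η))
    (PG : X → X) (PF : Y → Y)
    (hPG : ∀ p z, G (PG p) + ⟪(1 / τ) • (p - PG p), z - PG p⟫ ≤ G z)
    (hPF : ∀ q z, Fs (PF q) + ⟪(1 / τ) • (q - PF q), z - PF q⟫ ≤ Fs z)
    (x v p : ℕ → X) (y w q : ℕ → Y)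
    (hx : ∀ k, x (k + 1) = PG (p k))
    (hy : ∀ k, y (k + 1) = PF (q k))
    (hv : ∀ k, v (k + 1) + τ • (ContinuousLinearMap.adjoint V) (w (k + 1)) =
      (2 : ℝ) • x (k + 1) - p k)
    (hw : ∀ k, w (k + 1) - τ • A (v (k + 1)) = (2 : ℝ) • y (k + 1) - q k)
    (hp : ∀ k, p (k + 1) = p k + θ • (v (k + 1) - x (k + 1)))
    (hq : ∀ k, q (k + 1) = q k + θ • (w (k + 1) - y (k + 1)))
    (xh : X) (yh : Y)
    (hxh : IsSubgradientAt G (-(ContinuousLinearMap.adjoint V) yh) xh)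
    (hyh : IsSubgradientAt Fs (A xh) yh) :
    ∃ C : ℝ, 0 ≤ C ∧ ∀ N : ℕ,
      Real.sqrt (‖x N - xh‖ ^ 2 + ‖y N - yh‖ ^ 2) ≤
        C * ((1 + (1 - θ * (1 + α)) * η) / (1 + η)) ^ N :=
  pddr_mismatch_linear_convergence_general A V G Fs γG γFs hG hFs μG μFs μtG μtFs hμtG hμG hμGγ
    hμtFs hμFs hμFsγ c hc υ hυ τ hτ0 hτc α hα0 hα γ hγ ℓ hℓ σ hσ0 hσ η hη θ hθ0 hθ PG PF hPG hPF x v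
    p y w q hx hy hv hw hp hq xh yh hxh hyh
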